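/- Let β, μ, T > 0, σ² > 0, α > 2 and λ_t > 0, and define P(ν) = πν ∫₀^∞ exp(−πνβr − μTσ²·r^{α/2}) dr for ν ≥ 0 (so P(0) = 0). Let M ≥ 2 and let p_r, p_c be pmfs on {1, …, M} such that p_r(i) > 0 for all i and p_r(1) > p_r(i) for all 2 ≤ i ≤ M. Then ∑_{i=1}^M p_r(i)·P(λ_t·p_c(i)) < P(λ_t·p_r(1)). -/

import Mathlib

/-!
Integrating by parts, `P ν = β⁻¹ ∫₀^∞ (1 - exp (-π β ν s)) ψ(s) ds`, where
`ψ(s) = -(d/ds) exp (-μ T σ² s^(α/2)) > 0` is a Weibull density. Since `t ↦ 1 - exp (-t)` is strictly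
concave and strictly increasing, so is `P` on `[0, ∞)`. Jensen's inequality and monotonicity give
`∑ p_r(i) P(λ p_c(i)) ≤ P(λ ∑ p_r(i) p_c(i)) ≤ P(λ p_r(1))`, and one of the two steps is strict:
the first unless `p_c` is constant, and then `p_c ≡ 1/M < p_r(1)` makes the second strict.
-/

open Real MeasureTheory Set Finset
open Filter Topology

lemma StrictConcaveOn.sum_mul_lt_of_sum_mul_le {ι : Type*} {D : Set ℝ} {f : ℝ → ℝ}
    (hf : StrictConcaveOn ℝ D f) (hmono : StrictMonoOn f D) {t : Finset ι} {w x : ι → ℝ}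
    {y : ℝ} (hw : ∀ i ∈ t, 0 < w i) (hw1 : ∑ i ∈ t, w i = 1) (hx : ∀ i ∈ t, x i ∈ D)
    (hy : y ∈ D) (hxy : ∑ i ∈ t, w i * x i ≤ y) (hne : ∃ j ∈ t, x j ≠ y) :
    ∑ i ∈ t, w i * f (x i) < f y := by
  obtain ⟨j, hj, hjy⟩ := hne
  by_cases hconst : ∀ i ∈ t, x i = x j
  · have hmean : ∑ i ∈ t, w i * x i = x j := by
      rw [Finset.sum_congr rfl fun i hi => by rw [hconst i hi], ← Finset.sum_mul, hw1, one_mul]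
    have hfmean : ∑ i ∈ t, w i * f (x i) = f (x j) := by
      rw [Finset.sum_congr rfl fun i hi => by rw [hconst i hi], ← Finset.sum_mul, hw1, one_mul]
    rw [hfmean]
    exact hmono (hx j hj) hy (lt_of_le_of_ne (hmean ▸ hxy) hjy)
  · push Not at hconst
    obtain ⟨k, hk, hkj⟩ := hconst
    have hmem : ∑ i ∈ t, w i * x i ∈ D :=
      hf.1.sum_mem (fun i hi => (hw i hi).le) hw1 hx
    calc ∑ i ∈ t, w i * f (x i) < f (∑ i ∈ t, w i * x i) := by
          simpa only [smul_eq_mul] using hf.lt_map_sum hw hw1 hx ⟨k, hk, j, hj, hkj⟩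
      _ ≤ f y := hmono.monotoneOn hmem hy hxy

lemma exists_ne_of_sum_eq_of_lt {ι : Type*} [Fintype ι] {p q : ι → ℝ} {i₀ j : ι}
    (hle : ∀ i, p i ≤ p i₀) (hj : p j < p i₀) (hsum : ∑ i, q i = ∑ i, p i) :
    ∃ i, q i ≠ p i₀ := by
  by_contra! hq
  have : ∑ i, p i < ∑ i, q i := by
    rw [Finset.sum_congr rfl fun i _ => hq i]
    exact Finset.sum_lt_sum (fun i _ => hle i) ⟨j, Finset.mem_univ j, hj⟩
  exact this.ne' hsum

lemma setIntegral_lt_setIntegral_of_forall_lt {X : Type*} [MeasurableSpace X]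
    {μ : Measure X} {s : Set X} {f g : X → ℝ} (hs : MeasurableSet s) (hμs : μ s ≠ 0)
    (hf : IntegrableOn f s μ) (hg : IntegrableOn g s μ) (hlt : ∀ x ∈ s, f x < g x) :
    ∫ x in s, f x ∂μ < ∫ x in s, g x ∂μ := by
  have hpos : 0 < ∫ x in s, (g - f) x ∂μ := by
    rw [setIntegral_pos_iff_support_of_nonneg_ae ?_ (hg.sub hf)]
    · refine lt_of_lt_of_le (pos_iff_ne_zero.2 hμs) (measure_mono fun x hx => ⟨?_, hx⟩)
      exact (sub_pos.2 (hlt x hx)).ne'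
    · filter_upwards [ae_restrict_mem hs] with x hx
      exact (sub_pos.2 (hlt x hx)).le
  rw [Pi.sub_def, integral_sub hg hf] at hpos
  linarith

section OneSubExpTransform

variable {ψ : ℝ → ℝ}

lemma integrableOn_one_sub_exp_mul (hψ : IntegrableOn ψ (Ioi 0)) {G : ℝ} (hG : 0 ≤ G) :
    IntegrableOn (fun s => (1 - exp (-(G * s))) * ψ s) (Ioi 0) := by
  refine hψ.bdd_mul (c := 1) (by fun_prop) ?_
  filter_upwards [ae_restrict_mem measurableSet_Ioi] with s hs
  have hexp : exp (-(G * s)) ≤ 1 := exp_le_one_iff.2 (by nlinarith [mem_Ioi.1 hs])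
  rw [norm_eq_abs, abs_le]
  constructor <;> linarith [exp_pos (-(G * s))]

variable (hψ_pos : ∀ s ∈ Ioi (0 : ℝ), 0 < ψ s) (hψ : IntegrableOn ψ (Ioi 0)) {k : ℝ} (hk : 0 < k)
include hψ_pos hψ hk

lemma strictMonoOn_integral_one_sub_exp :
    StrictMonoOn (fun ν => ∫ s in Ioi 0, (1 - exp (-(k * ν * s))) * ψ s) (Ici 0) := by
  intro x hx y hy hxy
  refine setIntegral_lt_setIntegral_of_forall_lt measurableSet_Ioi (by simp)
    (integrableOn_one_sub_exp_mul hψ (by positivity [mem_Ici.1 hx]))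
    (integrableOn_one_sub_exp_mul hψ (by positivity [mem_Ici.1 hy])) fun s hs => ?_
  have hs : 0 < s := hs
  have : k * x * s < k * y * s := by gcongr
  have := exp_lt_exp.2 (neg_lt_neg this)
  nlinarith [hψ_pos s hs]

lemma strictConcaveOn_integral_one_sub_exp :
    StrictConcaveOn ℝ (Ici 0) (fun ν => ∫ s in Ioi 0, (1 - exp (-(k * ν * s))) * ψ s) := by
  refine ⟨convex_Ici 0, fun x hx y hy hxy a b ha hb hab => ?_⟩
  have hI : ∀ ν : ℝ, 0 ≤ ν → IntegrableOn (fun s => (1 - exp (-(k * ν * s))) * ψ s) (Ioi 0) :=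
    fun ν hν => integrableOn_one_sub_exp_mul hψ (by positivity)
  have hx : 0 ≤ x := hx
  have hy : 0 ≤ y := hy
  simp only [smul_eq_mul]
  rw [← integral_const_mul, ← integral_const_mul,
    ← integral_add ((hI x hx).const_mul a) ((hI y hy).const_mul b)]
  refine setIntegral_lt_setIntegral_of_forall_lt measurableSet_Ioi (by simp)
    (((hI x hx).const_mul a).add ((hI y hy).const_mul b)) (hI _ (by positivity)) fun s hs => ?_
  have hs : 0 < s := hs
  have hne : -(k * x * s) ≠ -(k * y * s) := by
    intro h
    exact hxy (by nlinarith [mul_pos hk hs])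
  have hconv := strictConvexOn_exp.2 (mem_univ _) (mem_univ _) hne ha hb hab
  have harg : a • -(k * x * s) + b • -(k * y * s) = -(k * (a * x + b * y) * s) := by
    simp only [smul_eq_mul]; ring
  rw [harg, smul_eq_mul, smul_eq_mul] at hconv
  have hmix : a * (1 - exp (-(k * x * s))) + b * (1 - exp (-(k * y * s)))
      < 1 - exp (-(k * (a * x + b * y) * s)) := by linarith
  calc a * ((1 - exp (-(k * x * s))) * ψ s) + b * ((1 - exp (-(k * y * s))) * ψ s)
      = (a * (1 - exp (-(k * x * s))) + b * (1 - exp (-(k * y * s)))) * ψ s := by ring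
    _ < (1 - exp (-(k * (a * x + b * y) * s))) * ψ s :=
        mul_lt_mul_of_pos_right hmix (hψ_pos s hs)

end OneSubExpTransform

noncomputable def weibullDensity (c a s : ℝ) : ℝ := c * a * s ^ (a - 1) * exp (-(c * s ^ a))

section WeibullDensity

variable {c a : ℝ}

lemma hasDerivAt_exp_neg_mul_rpow {x : ℝ} (hx : 0 < x) :
    HasDerivAt (fun s => exp (-(c * s ^ a))) (-weibullDensity c a x) x := by
  refine (((hasDerivAt_rpow_const (Or.inl hx.ne')).const_mul c).fun_neg.exp).congr_deriv ?_
  unfold weibullDensity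
  ring

lemma continuous_exp_neg_mul_rpow (ha : 0 < a) : Continuous fun s => exp (-(c * s ^ a)) :=
  (continuous_const.mul (continuous_rpow_const ha.le)).neg.rexp

lemma tendsto_exp_neg_mul_rpow_atTop (hc : 0 < c) (ha : 0 < a) :
    Tendsto (fun s => exp (-(c * s ^ a))) atTop (𝓝 0) :=
  tendsto_exp_atBot.comp <| tendsto_neg_atTop_atBot.comp <|
    (tendsto_rpow_atTop ha).const_mul_atTop hc

lemma weibullDensity_pos (hc : 0 < c) (ha : 0 < a) {s : ℝ} (hs : 0 < s) :
    0 < weibullDensity c a s := by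
  unfold weibullDensity
  positivity

lemma integrableOn_weibullDensity (hc : 0 < c) (ha : 0 < a) :
    IntegrableOn (weibullDensity c a) (Ioi 0) := by
  have h := integrableOn_Ioi_deriv_of_nonneg
    (continuous_exp_neg_mul_rpow ha).neg.continuousWithinAt
    (fun x hx => (hasDerivAt_exp_neg_mul_rpow (c := c) (a := a) hx).neg)
    (fun x hx => by rw [neg_neg]; exact (weibullDensity_pos hc ha hx).le)
    (tendsto_exp_neg_mul_rpow_atTop hc ha).neg
  simpa only [neg_neg] using h

lemma integrableOn_exp_neg_mul_sub_mul_rpow (hc : 0 < c) {G : ℝ} (hG : 0 < G) :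
    IntegrableOn (fun s => exp (-(G * s) - c * s ^ a)) (Ioi 0) := by
  refine (exp_neg_integrableOn_Ioi 0 hG).mono' (by fun_prop) ?_
  filter_upwards [ae_restrict_mem measurableSet_Ioi] with s hs
  rw [norm_eq_abs, abs_of_pos (exp_pos _)]
  have : 0 ≤ c * s ^ a := mul_nonneg hc.le (rpow_nonneg (mem_Ioi.1 hs).le a)
  exact exp_le_exp.2 (by linarith)

-- Integration by parts: `d/ds [(1 - exp (-(G * s))) * exp (-(c * s ^ a))]` is the difference
-- of the two integrands.
lemma mul_integral_exp_neg_mul_sub_mul_rpow (hc : 0 < c) (ha : 0 < a) {G : ℝ} (hG : 0 ≤ G) :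
    G * ∫ s in Ioi 0, exp (-(G * s) - c * s ^ a)
      = ∫ s in Ioi 0, (1 - exp (-(G * s))) * weibullDensity c a s := by
  rcases hG.eq_or_lt with rfl | hG
  · simp
  have hderiv : ∀ x ∈ Ioi (0 : ℝ),
      HasDerivAt (fun s => (1 - exp (-(G * s))) * exp (-(c * s ^ a)))
      (G * exp (-(G * x) - c * x ^ a) - (1 - exp (-(G * x))) * weibullDensity c a x) x := by
    intro x hx
    have h1 : HasDerivAt (fun s => 1 - exp (-(G * s))) (G * exp (-(G * x))) x := by
      simpa [mul_comm] using (((hasDerivAt_id x).const_mul G).neg.exp).const_sub 1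
    refine (h1.mul (hasDerivAt_exp_neg_mul_rpow hx)).congr_deriv ?_
    rw [sub_eq_add_neg (-(G * x)), exp_add]
    ring
  have hint₁ := (integrableOn_exp_neg_mul_sub_mul_rpow (a := a) hc hG).const_mul G
  have hint₂ := integrableOn_one_sub_exp_mul (integrableOn_weibullDensity hc ha) hG.le
  have hlim : Tendsto (fun s => (1 - exp (-(G * s))) * exp (-(c * s ^ a))) atTop (𝓝 0) := by
    simpa using (tendsto_const_nhds.sub (tendsto_exp_neg_mul_rpow_atTop hG zero_lt_one)).mul
      (tendsto_exp_neg_mul_rpow_atTop hc ha)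
  have h := integral_Ioi_of_hasDerivAt_of_tendsto
    ((by fun_prop : Continuous fun s => 1 - exp (-(G * s))).mul
      (continuous_exp_neg_mul_rpow ha)).continuousWithinAt
    hderiv (hint₁.sub hint₂) hlim
  rw [integral_sub hint₁ hint₂, integral_const_mul] at h
  simp only [Pi.mul_apply, mul_zero, neg_zero, exp_zero, sub_self, zero_mul] at h
  linarith

lemma pi_mul_integral_exp_eq_integral_one_sub_exp {β : ℝ} (hβ : 0 < β) (hc : 0 < c) (ha : 0 < a)
    {ν : ℝ} (hν : 0 ≤ ν) :
    π * ν * ∫ r in Ioi 0, exp (-(π * ν * β * r) - c * r ^ a)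
      = ∫ s in Ioi 0, (1 - exp (-(π * β * ν * s))) * (β⁻¹ * weibullDensity c a s) := by
  calc π * ν * ∫ r in Ioi 0, exp (-(π * ν * β * r) - c * r ^ a)
      = β⁻¹ * ((π * ν * β) * ∫ r in Ioi 0, exp (-(π * ν * β * r) - c * r ^ a)) := by
        field_simp
    _ = β⁻¹ * ∫ s in Ioi 0, (1 - exp (-(π * ν * β * s))) * weibullDensity c a s := by
        rw [mul_integral_exp_neg_mul_sub_mul_rpow hc ha (by positivity)]
    _ = _ := by
        rw [← integral_const_mul]
        congr 1 with s
        ring_nf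

end WeibullDensity

/-- Upper bound on the density of successful receptions of the sequential
model: if file 1 is strictly the most popular, then
`∑ p_r(i)·P(λ_t·p_c(i)) < P(λ_t·p_r(1))`. -/
theorem dsr_sequential_upper_bound
    (β μ T σ2 α lamt : ℝ) (hβ : 0 < β) (hμ : 0 < μ) (hT : 0 < T)
    (hσ2 : 0 < σ2) (hα : 2 < α) (hlamt : 0 < lamt)
    (P : ℝ → ℝ)
    (hP : ∀ ν, P ν = π * ν * ∫ r in Ioi (0:ℝ),
      Real.exp (-(π * ν * β * r) - μ * T * σ2 * r ^ (α / 2)))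
    (M : ℕ) (hM : 2 ≤ M)
    (pr pc : Fin M → ℝ)
    (hpr_pos : ∀ i, 0 < pr i) (hpr_sum : ∑ i, pr i = 1)
    (hpc_nonneg : ∀ i, 0 ≤ pc i) (hpc_sum : ∑ i, pc i = 1)
    (hmax : ∀ i : Fin M, i ≠ ⟨0, by omega⟩ → pr i < pr ⟨0, by omega⟩) :
    ∑ i, pr i * P (lamt * pc i) < P (lamt * pr ⟨0, by omega⟩) := by
  set i₀ : Fin M := ⟨0, by omega⟩
  set c := μ * T * σ2
  have hc : 0 < c := by positivity
  have ha : 0 < α / 2 := by linarith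
  have hψ_pos : ∀ s ∈ Ioi (0 : ℝ), 0 < β⁻¹ * weibullDensity c (α / 2) s :=
    fun s hs => mul_pos (inv_pos.2 hβ) (weibullDensity_pos hc ha hs)
  have hψ := (integrableOn_weibullDensity hc ha).const_mul β⁻¹
  have hPeq : EqOn (fun ν => ∫ s in Ioi 0,
      (1 - exp (-(π * β * ν * s))) * (β⁻¹ * weibullDensity c (α / 2) s)) P (Ici 0) :=
    fun ν hν => ((hP ν).trans (pi_mul_integral_exp_eq_integral_one_sub_exp hβ hc ha hν)).symm
  have hk : 0 < π * β := by positivity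
  have hle : ∀ i, pr i ≤ pr i₀ := fun i =>
    (eq_or_ne i i₀).elim (fun h => h ▸ le_rfl) fun h => (hmax i h).le
  have hmean : ∑ i, pr i * (lamt * pc i) ≤ lamt * pr i₀ :=
    calc ∑ i, pr i * (lamt * pc i) ≤ ∑ i, pr i₀ * (lamt * pc i) :=
          Finset.sum_le_sum fun i _ =>
            mul_le_mul_of_nonneg_right (hle i) (by positivity [hpc_nonneg i])
      _ = lamt * pr i₀ := by rw [← Finset.mul_sum, ← Finset.mul_sum, hpc_sum]; ring
  obtain ⟨j, hj⟩ := exists_ne_of_sum_eq_of_lt hle (hmax ⟨1, by omega⟩ (by simp [i₀, Fin.ext_iff]))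
    (hpc_sum.trans hpr_sum.symm)
  exact ((strictConcaveOn_integral_one_sub_exp hψ_pos hψ hk).congr hPeq).sum_mul_lt_of_sum_mul_le
    ((strictMonoOn_integral_one_sub_exp hψ_pos hψ hk).congr hPeq)
    (fun i _ => hpr_pos i) hpr_sum (fun i _ => mem_Ici.2 (by positivity [hpc_nonneg i]))
    (mem_Ici.2 (by positivity [hpr_pos i₀])) hmean
    ⟨j, Finset.mem_univ j, fun h => hj (mul_left_cancel₀ hlamt.ne' h)⟩
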